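/- The distortion of γ_{2k+1} is bounded below: dis(γ_{2k+1}) ≥ (π/2)·k/(k+1). In particular, evaluating at t_k = π/(2(k+1)), one has h_k(t_k) = 0 where h_k(t) = (1/(k+1)) Σ_{ℓ=0}^{k} cos((2ℓ+1)t), hence d_{2k+1}(γ_{2k+1}(0), γ_{2k+1}(t_k)) = π/2 while d_1(0, t_k) = π/(2(k+1)). -/

import Mathlib

open Real
open scoped RealInnerProductSpace

/-- The symmetric trigonometric moment curve `γ_{2k+1} : ℝ → ℝ^{2k+2}`. -/
noncomputable def gammaTMC (k : ℕ) (t : ℝ) : EuclideanSpace ℝ (Fin (2 * k + 2)) :=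
  WithLp.toLp 2 fun i =>
    (if i.val % 2 = 0 then Real.cos ((2 * (i.val / 2 : ℕ) + 1) * t)
     else Real.sin ((2 * (i.val / 2 : ℕ) + 1) * t)) / Real.sqrt (k + 1)

/-- The geodesic distance on the unit sphere: `d(x,y) = arccos(x·y)`. -/
noncomputable def sphDist {n : ℕ} (x y : EuclideanSpace ℝ (Fin n)) : ℝ :=
  Real.arccos ⟪x, y⟫

/-- The geodesic distance on `S¹ = ℝ/2πℤ` between (the classes of) `s` and `t`. -/
noncomputable def circDist (s t : ℝ) : ℝ :=
  dist (s : AddCircle (2 * π)) (t : AddCircle (2 * π))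

/-- `h_k(t) = (1/(k+1)) ∑_{ℓ=0}^{k} cos((2ℓ+1) t)`. -/
noncomputable def hkFun (k : ℕ) (t : ℝ) : ℝ :=
  (∑ ℓ ∈ Finset.range (k + 1), Real.cos ((2 * (ℓ : ℝ) + 1) * t)) / (k + 1)

lemma two_sin_mul_cos (t u : ℝ) :
    2 * Real.sin t * Real.cos u = Real.sin (u + t) - Real.sin (u - t) := by
  rw [Real.sin_add, Real.sin_sub]; ring

lemma sum_cos_odd (t : ℝ) (n : ℕ) :
    2 * Real.sin t * ∑ ℓ ∈ Finset.range n, Real.cos ((2 * (ℓ : ℝ) + 1) * t)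
      = Real.sin (2 * n * t) := by
  induction n with
  | zero => simp
  | succ n ih =>
    rw [Finset.sum_range_succ, mul_add, ih, two_sin_mul_cos]
    have h1 : (2 * (n : ℝ) + 1) * t + t = 2 * ((n : ℕ) + 1 : ℝ) * t := by ring
    have h2 : (2 * (n : ℝ) + 1) * t - t = 2 * (n : ℝ) * t := by ring
    rw [h1, h2]
    push_cast
    ring

lemma sum_range_pair (g : ℕ → ℝ) (n : ℕ) :
    ∑ i ∈ Finset.range (2 * n), g i
      = ∑ ℓ ∈ Finset.range n, (g (2 * ℓ) + g (2 * ℓ + 1)) := by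
  induction n with
  | zero => simp
  | succ n ih =>
    have h : 2 * (n + 1) = (2 * n + 1) + 1 := by ring
    rw [h, Finset.sum_range_succ, Finset.sum_range_succ, ih, Finset.sum_range_succ]
    ring

lemma inner_gamma (k : ℕ) (t : ℝ) : ⟪gammaTMC k 0, gammaTMC k t⟫ = hkFun k t := by
  have hsq : Real.sqrt (k + 1) * Real.sqrt (k + 1) = (k : ℝ) + 1 :=
    Real.mul_self_sqrt (by positivity)
  rw [PiLp.inner_apply]
  simp only [RCLike.inner_apply, starRingEnd_apply, star_trivial]
  set G : ℕ → ℝ := fun i =>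
    (if i % 2 = 0 then Real.cos ((2 * ((i / 2 : ℕ) : ℝ) + 1) * 0)
     else Real.sin ((2 * ((i / 2 : ℕ) : ℝ) + 1) * 0)) / Real.sqrt (k + 1) *
    ((if i % 2 = 0 then Real.cos ((2 * ((i / 2 : ℕ) : ℝ) + 1) * t)
     else Real.sin ((2 * ((i / 2 : ℕ) : ℝ) + 1) * t)) / Real.sqrt (k + 1)) with hG
  have h1 : ∑ x : Fin (2 * k + 2), (gammaTMC k t).ofLp x * (gammaTMC k 0).ofLp x
      = ∑ i ∈ Finset.range (2 * k + 2), G i := by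
    rw [← Fin.sum_univ_eq_sum_range G (2 * k + 2)]
    exact Finset.sum_congr rfl (fun _ _ => mul_comm _ _)
  rw [h1, show 2 * k + 2 = 2 * (k + 1) from rfl, sum_range_pair]
  have h2 : ∀ ℓ ∈ Finset.range (k + 1),
      G (2 * ℓ) + G (2 * ℓ + 1) = Real.cos ((2 * (ℓ : ℝ) + 1) * t) / ((k : ℝ) + 1) := by
    intro ℓ _
    have e1 : (2 * ℓ) % 2 = 0 := by omega
    have e2 : (2 * ℓ) / 2 = ℓ := by omega
    have e3 : (2 * ℓ + 1) % 2 = 1 := by omega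
    have e4 : (2 * ℓ + 1) / 2 = ℓ := by omega
    simp only [hG, e1, e2, e3, e4]
    norm_num
    have hs : Real.sqrt ((k : ℝ) + 1) ≠ 0 := by positivity
    field_simp
    rw [Real.sq_sqrt (by positivity)]
  rw [Finset.sum_congr rfl h2, ← Finset.sum_div, hkFun]

/-- The distortion `dis(γ_{2k+1}) = sup_{s,t} |d_{2k+1}(γ(s),γ(t)) − d₁(s,t)|`. -/
noncomputable def disGamma (k : ℕ) : ℝ :=
  sSup {v : ℝ | ∃ s t : ℝ, v = |sphDist (gammaTMC k s) (gammaTMC k t) - circDist s t|}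

/-- At `t_k = π/(2(k+1))` one has `h_k(t_k) = 0`, hence
`d_{2k+1}(γ(0), γ(t_k)) = π/2` while `d₁(0, t_k) = π/(2(k+1))`;
consequently `dis(γ_{2k+1}) ≥ (π/2)·k/(k+1)`. -/
theorem stmt10 (k : ℕ) (hk : 1 ≤ k) :
    hkFun k (π / (2 * (k + 1))) = 0 ∧
    sphDist (gammaTMC k 0) (gammaTMC k (π / (2 * (k + 1)))) = π / 2 ∧
    circDist 0 (π / (2 * (k + 1))) = π / (2 * (k + 1)) ∧
    π / 2 * (k / (k + 1)) ≤ disGamma k := by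
  set tk : ℝ := π / (2 * (k + 1)) with htk
  have hkpos : (0:ℝ) < (k:ℝ) + 1 := by positivity
  have htkpos : 0 < tk := by rw [htk]; positivity
  have htklt : tk ≤ π / 2 := by
    rw [htk]
    apply div_le_div_of_nonneg_left pi_pos.le (by norm_num)
    nlinarith
  have htkltpi : tk < π := lt_of_le_of_lt htklt (by linarith [pi_pos])
  -- Part 1
  have h1 : hkFun k tk = 0 := by
    have hsin : Real.sin tk ≠ 0 :=
      ne_of_gt (Real.sin_pos_of_pos_of_lt_pi htkpos htkltpi)
    have htel := sum_cos_odd tk (k + 1)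
    have harg : 2 * ((k + 1 : ℕ) : ℝ) * tk = π := by
      push_cast
      rw [htk]
      field_simp
    rw [harg, Real.sin_pi] at htel
    have hsum : ∑ ℓ ∈ Finset.range (k + 1), Real.cos ((2 * (ℓ : ℝ) + 1) * tk) = 0 := by
      rcases mul_eq_zero.mp htel with h | h
      · rcases mul_eq_zero.mp h with h' | h'
        · norm_num at h'
        · exact absurd h' hsin
      · exact h
    rw [hkFun, hsum, zero_div]
  -- Part 2
  have h2 : sphDist (gammaTMC k 0) (gammaTMC k tk) = π / 2 := by
    rw [sphDist, inner_gamma, h1, Real.arccos_zero]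
  -- Part 3
  have hp : (2 * π) ≠ 0 := by positivity
  have h3 : circDist 0 tk = tk := by
    rw [circDist]
    have e0 : ((0:ℝ) : AddCircle (2 * π)) - (tk : AddCircle (2 * π))
        = -((tk : ℝ) : AddCircle (2 * π)) := by
      rw [← QuotientAddGroup.mk_sub]
      norm_num
    have habs : |tk| ≤ |2 * π| / 2 := by
      rw [abs_of_nonneg htkpos.le, abs_of_pos (by positivity : (0:ℝ) < 2 * π)]
      linarith
    rw [dist_eq_norm, e0, norm_neg,
      (AddCircle.norm_coe_eq_abs_iff (p := 2 * π) hp).mpr habs,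
      abs_of_nonneg htkpos.le]
  -- Part 4
  refine ⟨h1, h2, h3, ?_⟩
  have hbdd : BddAbove {v : ℝ | ∃ s t : ℝ,
      v = |sphDist (gammaTMC k s) (gammaTMC k t) - circDist s t|} := by
    refine ⟨π, ?_⟩
    rintro v ⟨s, t, rfl⟩
    have ha1 : 0 ≤ sphDist (gammaTMC k s) (gammaTMC k t) := Real.arccos_nonneg _
    have ha2 : sphDist (gammaTMC k s) (gammaTMC k t) ≤ π := Real.arccos_le_pi _
    have hb1 : 0 ≤ circDist s t := dist_nonneg
    have hb2 : circDist s t ≤ π := by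
      rw [circDist, dist_eq_norm]
      have := AddCircle.norm_le_half_period (p := 2 * π)
        (x := (s : AddCircle (2 * π)) - (t : AddCircle (2 * π))) hp
      rw [abs_of_pos (by positivity : (0:ℝ) < 2 * π)] at this
      linarith
    rw [abs_sub_le_iff]
    constructor <;> linarith
  have hmem : |sphDist (gammaTMC k 0) (gammaTMC k tk) - circDist 0 tk| ∈
      {v : ℝ | ∃ s t : ℝ, v = |sphDist (gammaTMC k s) (gammaTMC k t) - circDist s t|} :=
    ⟨0, tk, rfl⟩
  have hle := le_csSup hbdd hmem
  have heq : |sphDist (gammaTMC k 0) (gammaTMC k tk) - circDist 0 tk|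
      = π / 2 * (k / (k + 1)) := by
    rw [h2, h3, abs_of_nonneg (by linarith), htk]
    field_simp
    ring
  rw [disGamma]
  rw [heq] at hle
  exact hle
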